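/- arXiv:2404.15079 — 3 statements merged into one kernel-verified Lean document; each statement's English description precedes it below -/
import Mathlib

section
/- Let δ, σ, q > 0, α ∈ (0,1), p > 0 and λ ∈ ℝ with qδ − λ > 0. Then there exists a unique a > 0 satisfying the integral equation ∫_a^∞ ( α p y^{α−1} − (qδ − λ) ) · y^{−2δ/σ² − 1} dy = 0, and it is given by a*(p,λ) = ( (2αδ/(2δ + σ²(1−α))) · p/(qδ − λ) )^{1/(1−α)}. -/
open MeasureTheory Set

lemma key_integral (α p K c a : ℝ) (ha : 0 < a) (hc : 0 < c) (hα1 : α < 1) :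
    (∫ y in Set.Ioi a, (α * p * y ^ (α - 1) - K) * y ^ (-c - 1)) =
      α * p * (a ^ (α - 1 - c) / (c + 1 - α)) - K * (a ^ (-c) / c) := by
  have h1 : (α - 2 - c) < -1 := by linarith
  have h2 : (-c - 1 : ℝ) < -1 := by linarith
  have hi1 : IntegrableOn (fun y : ℝ => y ^ (α - 2 - c)) (Set.Ioi a) :=
    integrableOn_Ioi_rpow_of_lt h1 ha
  have hi2 : IntegrableOn (fun y : ℝ => y ^ (-c - 1)) (Set.Ioi a) :=
    integrableOn_Ioi_rpow_of_lt h2 ha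
  have hcong : (∫ y in Set.Ioi a, (α * p * y ^ (α - 1) - K) * y ^ (-c - 1)) =
      ∫ y in Set.Ioi a, (α * p * y ^ (α - 2 - c) - K * y ^ (-c - 1)) := by
    apply setIntegral_congr_fun measurableSet_Ioi
    intro y hy
    have hy0 : 0 < y := ha.trans hy
    have : y ^ (α - 1) * y ^ (-c - 1) = y ^ (α - 2 - c) := by
      rw [← Real.rpow_add hy0]; ring_nf
    simp only [sub_mul, mul_assoc, this]
  rw [hcong, integral_sub ((hi1.const_mul _)) (hi2.const_mul _),
    integral_const_mul, integral_const_mul,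
    integral_Ioi_rpow_of_lt h1 ha, integral_Ioi_rpow_of_lt h2 ha]
  have e1 : α - 2 - c + 1 = α - 1 - c := by ring
  have e2 : -c - 1 + 1 = -c := by ring
  rw [e1, e2]
  have hne1 : α - 1 - c ≠ 0 := by intro h; nlinarith
  have hne2 : (-c : ℝ) ≠ 0 := by linarith
  have hne3 : c + 1 - α ≠ 0 := by intro h; nlinarith
  field_simp [show (1:ℝ) - α + c ≠ 0 by intro h; nlinarith]
  ring

lemma Raux (δ σ2 p K α : ℝ) (hσ2 : 0 < σ2) (hK : 0 < K)
    (hd : 0 < 2 * δ + σ2 * (1 - α)) :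
    (2 * α * δ / (2 * δ + σ2 * (1 - α))) * (p / K) =
      α * p * (2 * δ / σ2) / (K * ((2 * δ / σ2) + 1 - α)) := by
  have h : (2 * δ / σ2) + 1 - α = (2 * δ + σ2 * (1 - α)) / σ2 := by
    field_simp; ring
  rw [h]
  field_simp

theorem stmt_2 (δ σ q α p l : ℝ) (hδ : 0 < δ) (hσ : 0 < σ) (hq : 0 < q)
    (hα0 : 0 < α) (hα1 : α < 1) (hp : 0 < p) (hl : 0 < q * δ - l) :
    let aStar : ℝ :=
      ((2 * α * δ / (2 * δ + σ ^ 2 * (1 - α))) * (p / (q * δ - l))) ^ ((1 : ℝ) / (1 - α))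
    (0 < aStar ∧
        (∫ y in Set.Ioi aStar,
            (α * p * y ^ (α - 1) - (q * δ - l)) * y ^ (-(2 * δ / σ ^ 2) - 1)) = 0) ∧
      ∀ a : ℝ, 0 < a →
        (∫ y in Set.Ioi a,
            (α * p * y ^ (α - 1) - (q * δ - l)) * y ^ (-(2 * δ / σ ^ 2) - 1)) = 0 →
        a = aStar := by
  intro aStar
  set c : ℝ := 2 * δ / σ ^ 2 with hcdef
  set K : ℝ := q * δ - l with hKdef
  have hσ2 : (0 : ℝ) < σ ^ 2 := by positivity
  have hc : 0 < c := by positivity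
  have h1α : (0 : ℝ) < 1 - α := by linarith
  have hcα : 0 < c + 1 - α := by linarith
  have hd : (0:ℝ) < 2 * δ + σ ^ 2 * (1 - α) := by nlinarith
  set R : ℝ := α * p * c / (K * (c + 1 - α)) with hRdef
  have hR : 0 < R := by positivity
  have haStarR : aStar = R ^ ((1 : ℝ) / (1 - α)) := by
    have h0 : aStar = ((2 * α * δ / (2 * δ + σ ^ 2 * (1 - α))) * (p / K)) ^ ((1 : ℝ) / (1 - α)) :=
      rfl
    rw [h0, Raux δ (σ ^ 2) p K α hσ2 hl hd, hRdef, hcdef]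
  clear_value aStar
  clear_value R
  clear_value c
  have hK : 0 < K := hl
  clear_value K
  have haStar : 0 < aStar := by
    rw [haStarR]; exact Real.rpow_pos_of_pos hR _
  have haStarpow : aStar ^ (1 - α) = R := by
    rw [haStarR, one_div, Real.rpow_inv_rpow hR.le (by linarith)]
  have key : ∀ a : ℝ, 0 < a →
      ((∫ y in Set.Ioi a,
          (α * p * y ^ (α - 1) - K) * y ^ (-c - 1)) = 0 ↔ a ^ (1 - α) = R) := by
    intro a ha
    rw [key_integral α p K c a ha hc hα1]
    have hsplit : a ^ (α - 1 - c) = a ^ (-c) / a ^ (1 - α) := by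
      rw [eq_div_iff (Real.rpow_pos_of_pos ha _).ne', ← Real.rpow_add ha]
      ring_nf
    have hac : 0 < a ^ (-c) := Real.rpow_pos_of_pos ha _
    have ha1 : 0 < a ^ (1 - α) := Real.rpow_pos_of_pos ha _
    rw [hsplit, hRdef, sub_eq_zero]
    constructor
    · intro h
      field_simp at h ⊢
      nlinarith [h]
    · intro h
      field_simp at h ⊢
      nlinarith [h]
  refine ⟨⟨haStar, ?_⟩, ?_⟩
  · exact (key aStar haStar).2 haStarpow
  · intro a ha hint
    have h := (key a ha).1 hint
    have heq : a ^ (1 - α) = aStar ^ (1 - α) := by rw [h, haStarpow]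
    calc a = (a ^ (1 - α)) ^ (1 - α)⁻¹ := by
            rw [Real.rpow_rpow_inv ha.le (by linarith)]
      _ = (aStar ^ (1 - α)) ^ (1 - α)⁻¹ := by rw [heq]
      _ = aStar := Real.rpow_rpow_inv haStar.le (by linarith)
end

section
/- Let δ, σ, q > 0 and α, β ∈ (0,1). Define f(θ) := ((2δ+σ²)/(2δ+σ²(1−α))) · (2δ/(2δ+σ²))^α · θ^{α+β} − qδθ, λ(θ) := qδ − ((2δ+σ²)/(2δ))^{1−α} · (2δα/(2δ+σ²(1−α))) · θ^{α+β−1}, a(θ) := (2δ/(2δ+σ²))θ, and for a > 0 let p_a be the probability measure on (0,∞) with density p_a(dx) = ((2δ+σ²)/σ²) a^{2δ/σ²+1} x^{−2δ/σ²−2} 1_{x ≥ a} dx. Then for every θ > 0 one has f'(θ) + λ(θ) = β θ^{β−1} · ∫_{(0,∞)} x^α p_{a(θ)}(dx). -/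
open MeasureTheory Set

/-- The stationary distribution of a geometric Brownian motion with drift `-δ` and
volatility `σ`, reflected upwards à la Skorohod at the level `a`: the measure on `(0,∞)`
with density `((2δ+σ²)/σ²) · a^(2δ/σ²+1) · x^(-2δ/σ²-2) · 1_{x ≥ a}`. -/
noncomputable def reflectedStationary (δ σ a : ℝ) : Measure ℝ :=
  volume.withDensity fun x =>
    ENNReal.ofReal
      (if a ≤ x then ((2 * δ + σ ^ 2) / σ ^ 2) * a ^ (2 * δ / σ ^ 2 + 1)
          * x ^ (-(2 * δ / σ ^ 2) - 2) else 0)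

lemma integral_rpow_reflectedStationary (δ σ α : ℝ) (hδ : 0 < δ) (hσ : 0 < σ)
    (hα1 : α < 1) {a : ℝ} (ha : 0 < a) :
    ∫ x, x ^ α ∂(reflectedStationary δ σ a)
      = ((2 * δ + σ ^ 2) / (2 * δ + σ ^ 2 * (1 - α))) * a ^ α := by
  have hσ2 : (0:ℝ) < σ ^ 2 := by positivity
  set K : ℝ := ((2 * δ + σ ^ 2) / σ ^ 2) * a ^ (2 * δ / σ ^ 2 + 1) with hK
  have hK0 : 0 ≤ K := by positivity
  set e : ℝ := -(2 * δ / σ ^ 2) - 2 with he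
  have hmeas : Measurable fun x : ℝ => Real.toNNReal (if a ≤ x then K * x ^ e else 0) := by
    exact Measurable.real_toNNReal
      (Measurable.ite measurableSet_Ici (by fun_prop) measurable_const)
  have hrw : reflectedStationary δ σ a
      = volume.withDensity fun x =>
          (Real.toNNReal (if a ≤ x then K * x ^ e else 0) : ENNReal) := rfl
  rw [hrw, integral_withDensity_eq_integral_smul hmeas]
  have hptwise : ∀ x : ℝ,
      (Real.toNNReal (if a ≤ x then K * x ^ e else 0)) • (x ^ α)
        = Set.indicator (Ici a) (fun x => K * x ^ (e + α)) x := by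
    intro x
    rw [NNReal.smul_def]
    by_cases hx : a ≤ x
    · have hx0 : 0 < x := lt_of_lt_of_le ha hx
      have hnn : 0 ≤ K * x ^ e := by positivity
      simp only [hx, if_pos, Set.indicator_of_mem (mem_Ici.mpr hx), smul_eq_mul,
        Real.coe_toNNReal _ hnn]
      rw [Real.rpow_add hx0]; ring
    · simp [hx, Set.indicator_of_notMem (fun h => hx (mem_Ici.mp h))]
  rw [MeasureTheory.integral_congr_ae (Filter.Eventually.of_forall hptwise),
    integral_indicator measurableSet_Ici, MeasureTheory.integral_Ici_eq_integral_Ioi,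
    integral_const_mul]
  have heα : e + α < -1 := by
    have : 0 < 2 * δ / σ ^ 2 := by positivity
    simp only [he]; linarith
  rw [integral_Ioi_rpow_of_lt heα ha]
  have h2 : (0:ℝ) < 2 * δ / σ ^ 2 + 1 - α := by
    have : 0 < 2 * δ / σ ^ 2 := by positivity
    linarith
  have hcomb : a ^ (2 * δ / σ ^ 2 + 1) * a ^ (e + α + 1) = a ^ α := by
    rw [← Real.rpow_add ha]; congr 1; simp [he]; ring
  have hval : K * (-a ^ (e + α + 1) / (e + α + 1))
      = ((2 * δ + σ ^ 2) / σ ^ 2) * a ^ α * (-1 / (e + α + 1)) := by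
    rw [hK, ← hcomb]; ring
  rw [hval]
  have hne : e + α + 1 ≠ 0 := by
    simp only [he]; intro h; apply h2.ne'; linarith
  have hden : 2 * δ + σ ^ 2 * (1 - α) = σ ^ 2 * (-(e + α + 1)) := by
    simp only [he]; field_simp; ring
  rw [hden]
  clear_value e K
  generalize e + α + 1 = y at hne ⊢
  field_simp

theorem stmt_8 (δ σ q α β : ℝ) (hδ : 0 < δ) (hσ : 0 < σ) (hq : 0 < q)
    (hα0 : 0 < α) (hα1 : α < 1) (hβ0 : 0 < β) (hβ1 : β < 1) :
    let f : ℝ → ℝ := fun θ =>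
      ((2 * δ + σ ^ 2) / (2 * δ + σ ^ 2 * (1 - α))) * (2 * δ / (2 * δ + σ ^ 2)) ^ α *
        θ ^ (α + β) - q * δ * θ
    let lam : ℝ → ℝ := fun θ =>
      q * δ - ((2 * δ + σ ^ 2) / (2 * δ)) ^ (1 - α) *
        (2 * δ * α / (2 * δ + σ ^ 2 * (1 - α))) * θ ^ (α + β - 1)
    let barrier : ℝ → ℝ := fun θ => (2 * δ / (2 * δ + σ ^ 2)) * θ
    ∀ θ : ℝ, 0 < θ →
      deriv f θ + lam θ =
        β * θ ^ (β - 1) * ∫ x, x ^ α ∂(reflectedStationary δ σ (barrier θ)) := by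
  intro f lam barrier θ hθ
  have hσ2 : (0:ℝ) < σ ^ 2 := by positivity
  have hS : (0:ℝ) < 2 * δ + σ ^ 2 := by positivity
  have hD : (0:ℝ) < 2 * δ + σ ^ 2 * (1 - α) := by nlinarith
  have hr : (0:ℝ) < 2 * δ / (2 * δ + σ ^ 2) := by positivity
  have hb : 0 < barrier θ := by
    simp only [barrier]; positivity
  -- the integral
  have hint : ∫ x, x ^ α ∂(reflectedStationary δ σ (barrier θ))
      = ((2 * δ + σ ^ 2) / (2 * δ + σ ^ 2 * (1 - α))) * (barrier θ) ^ α :=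
    integral_rpow_reflectedStationary δ σ α hδ hσ hα1 hb
  -- derivative of f
  set C : ℝ := ((2 * δ + σ ^ 2) / (2 * δ + σ ^ 2 * (1 - α))) * (2 * δ / (2 * δ + σ ^ 2)) ^ α
    with hC
  have hderiv : deriv f θ = C * ((α + β) * θ ^ (α + β - 1)) - q * δ := by
    have h1 : HasDerivAt (fun θ : ℝ => C * θ ^ (α + β) - q * δ * θ)
        (C * ((α + β) * θ ^ (α + β - 1)) - q * δ * 1) θ := by
      exact ((Real.hasDerivAt_rpow_const (Or.inl hθ.ne')).const_mul C).sub
        ((hasDerivAt_id θ).const_mul (q * δ))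
    simpa using h1.deriv
  -- rpow identities
  have hpow1 : ((2 * δ + σ ^ 2) / (2 * δ)) ^ (1 - α)
      = ((2 * δ + σ ^ 2) / (2 * δ)) * (2 * δ / (2 * δ + σ ^ 2)) ^ α := by
    have hbpos : (0:ℝ) < (2 * δ + σ ^ 2) / (2 * δ) := by positivity
    rw [Real.rpow_sub hbpos, Real.rpow_one]
    rw [show (2 * δ / (2 * δ + σ ^ 2)) = ((2 * δ + σ ^ 2) / (2 * δ))⁻¹ by
      rw [inv_div]]
    rw [Real.inv_rpow hbpos.le, div_eq_mul_inv]
  have hpow2 : (barrier θ) ^ α = (2 * δ / (2 * δ + σ ^ 2)) ^ α * θ ^ α := by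
    simp only [barrier]
    exact Real.mul_rpow hr.le hθ.le
  have hpow3 : θ ^ (β - 1) * θ ^ α = θ ^ (α + β - 1) := by
    rw [← Real.rpow_add hθ]; ring_nf
  -- put everything together
  rw [hderiv, hint, hpow2]
  simp only [lam, hpow1, hC]
  set A : ℝ := (2 * δ / (2 * δ + σ ^ 2)) ^ α
  set t : ℝ := θ ^ (α + β - 1) with ht
  have htθ : θ ^ (β - 1) * θ ^ α = t := hpow3
  have key : (2 * δ + σ ^ 2) / (2 * δ) * A * (2 * δ * α / (2 * δ + σ ^ 2 * (1 - α)))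
      = (2 * δ + σ ^ 2) / (2 * δ + σ ^ 2 * (1 - α)) * A * α := by
    field_simp
  calc (2 * δ + σ ^ 2) / (2 * δ + σ ^ 2 * (1 - α)) * A * ((α + β) * t) - q * δ +
        (q * δ - (2 * δ + σ ^ 2) / (2 * δ) * A * (2 * δ * α / (2 * δ + σ ^ 2 * (1 - α))) * t)
      = (2 * δ + σ ^ 2) / (2 * δ + σ ^ 2 * (1 - α)) * A * ((α + β) * t)
          - (2 * δ + σ ^ 2) / (2 * δ + σ ^ 2 * (1 - α)) * A * α * t := by
        rw [key]; ring
    _ = (2 * δ + σ ^ 2) / (2 * δ + σ ^ 2 * (1 - α)) * A * β * t := by ring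
    _ = β * θ ^ (β - 1) * ((2 * δ + σ ^ 2) / (2 * δ + σ ^ 2 * (1 - α)) * (A * θ ^ α)) := by
        rw [← htθ]; ring
end

section
/- Let δ, σ, q > 0 and α, β ∈ (0,1) with α + β < 1. Define f(θ) := ((2δ+σ²)/(2δ+σ²(1−α))) · (2δ/(2δ+σ²))^α · θ^{α+β} − qδθ, θ̂ := ((2δ+σ²)/(2δ))^{(1−α)/(1−α−β)} · ( 2(α+β)/(q(2δ+σ²(1−α))) )^{1/(1−α−β)}, and θ* := ((2δ+σ²)/(2δ))^{(1−α)/(1−α−β)} · ( 2α/(q(2δ+σ²(1−α))) )^{1/(1−α−β)}. Then θ* ≠ θ̂ and f(θ*) < f(θ̂). -/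
open MeasureTheory Set

/-- Tangent-line / Bernoulli step: if `y` is the critical point of
`θ ↦ C θ^k − d θ` (i.e. `C * k = d * y^(1-k)`), then any other positive `x`
gives a strictly smaller value. -/
lemma aux_tangent {C d k x y : ℝ} (hC : 0 < C) (hd : 0 < d) (hk0 : 0 < k) (hk1 : k < 1)
    (hx : 0 < x) (hy : 0 < y) (hxy : x ≠ y)
    (hcrit : C * k = d * y ^ (1 - k)) :
    C * x ^ k - d * x < C * y ^ k - d * y := by
  have hs : -1 ≤ x / y - 1 := by
    have : 0 < x / y := div_pos hx hy
    linarith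
  have hs' : x / y - 1 ≠ 0 := by
    intro h
    apply hxy
    field_simp at h
    linarith
  have hbern := rpow_one_add_lt_one_add_mul_self hs hs' hk0 hk1
  rw [show (1 : ℝ) + (x / y - 1) = x / y by ring] at hbern
  have hdiv : (x / y) ^ k = x ^ k / y ^ k := Real.div_rpow hx.le hy.le k
  rw [hdiv] at hbern
  have hyk : 0 < y ^ k := Real.rpow_pos_of_pos hy k
  have h1 : x ^ k < y ^ k * (1 + k * (x / y - 1)) := by
    rw [← div_lt_iff₀' hyk]
    exact hbern
  have hmul : C * k * (y ^ k / y) = d := by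
    have hy1 : y ^ (1 - k) * y ^ k = y := by
      rw [← Real.rpow_add hy]; norm_num
    rw [hcrit]
    calc d * y ^ (1 - k) * (y ^ k / y) = d * (y ^ (1 - k) * y ^ k) / y := by ring
      _ = d * y / y := by rw [hy1]
      _ = d := by field_simp
  have key : C * (y ^ k * (k * (x / y - 1))) = d * (x - y) := by
    have h2 : C * (y ^ k * (k * (x / y - 1))) = C * k * (y ^ k / y) * (x - y) := by
      field_simp
    rw [h2, hmul]
  nlinarith [mul_lt_mul_of_pos_left h1 hC]

theorem stmt_14 (δ σ q α β : ℝ) (hδ : 0 < δ) (hσ : 0 < σ) (hq : 0 < q)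
    (hα0 : 0 < α) (hα1 : α < 1) (hβ0 : 0 < β) (hβ1 : β < 1) (hαβ : α + β < 1) :
    let f : ℝ → ℝ := fun θ =>
      ((2 * δ + σ ^ 2) / (2 * δ + σ ^ 2 * (1 - α))) * (2 * δ / (2 * δ + σ ^ 2)) ^ α *
        θ ^ (α + β) - q * δ * θ
    let θhat : ℝ :=
      ((2 * δ + σ ^ 2) / (2 * δ)) ^ ((1 - α) / (1 - α - β)) *
        (2 * (α + β) / (q * (2 * δ + σ ^ 2 * (1 - α)))) ^ ((1 : ℝ) / (1 - α - β))
    let θStar : ℝ :=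
      ((2 * δ + σ ^ 2) / (2 * δ)) ^ ((1 - α) / (1 - α - β)) *
        (2 * α / (q * (2 * δ + σ ^ 2 * (1 - α)))) ^ ((1 : ℝ) / (1 - α - β))
    θStar ≠ θhat ∧ f θStar < f θhat := by
  intro f θhat θStar
  have hσ2 : 0 < σ ^ 2 := by positivity
  have hE : 0 < (2 * δ + σ ^ 2) / (2 * δ) := by positivity
  have hw : 0 < 2 * δ + σ ^ 2 * (1 - α) := by nlinarith
  have hD : 0 < q * (2 * δ + σ ^ 2 * (1 - α)) := by positivity
  have hm : 0 < 1 - α - β := by linarith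
  have hG : 0 < 2 * (α + β) / (q * (2 * δ + σ ^ 2 * (1 - α))) := by positivity
  have hH : 0 < 2 * α / (q * (2 * δ + σ ^ 2 * (1 - α))) := by positivity
  have hP : 0 < ((2 * δ + σ ^ 2) / (2 * δ)) ^ ((1 - α) / (1 - α - β)) :=
    Real.rpow_pos_of_pos hE _
  have hθhat : 0 < θhat := mul_pos hP (Real.rpow_pos_of_pos hG _)
  have hθStar : 0 < θStar := mul_pos hP (Real.rpow_pos_of_pos hH _)
  have hlt : θStar < θhat := by
    have h2 : 2 * α / (q * (2 * δ + σ ^ 2 * (1 - α)))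
        < 2 * (α + β) / (q * (2 * δ + σ ^ 2 * (1 - α))) := by
      gcongr
      · linarith
    exact mul_lt_mul_of_pos_left
      (Real.rpow_lt_rpow hH.le h2 (by positivity)) hP
  have hne : θStar ≠ θhat := ne_of_lt hlt
  refine ⟨hne, ?_⟩
  set C : ℝ := ((2 * δ + σ ^ 2) / (2 * δ + σ ^ 2 * (1 - α))) * (2 * δ / (2 * δ + σ ^ 2)) ^ α
    with hCdef
  have hB : 0 < 2 * δ / (2 * δ + σ ^ 2) := by positivity
  have hC : 0 < C := by
    apply mul_pos
    · apply div_pos (by linarith) hw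
    · exact Real.rpow_pos_of_pos hB α
  -- critical point identity : C * (α+β) = q * δ * θhat ^ (1 - (α+β))
  have hEα : 0 < ((2 * δ + σ ^ 2) / (2 * δ)) ^ α := Real.rpow_pos_of_pos hE α
  have hBα : (2 * δ / (2 * δ + σ ^ 2)) ^ α * ((2 * δ + σ ^ 2) / (2 * δ)) ^ α = 1 := by
    rw [← Real.mul_rpow hB.le hE.le]
    rw [show 2 * δ / (2 * δ + σ ^ 2) * ((2 * δ + σ ^ 2) / (2 * δ)) = 1 by
      field_simp]
    exact Real.one_rpow α
  have hcrit : C * (α + β) = q * δ * θhat ^ (1 - (α + β)) := by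
    have hmid : θhat ^ (1 - (α + β))
        = ((2 * δ + σ ^ 2) / (2 * δ)) ^ (1 - α) *
          (2 * (α + β) / (q * (2 * δ + σ ^ 2 * (1 - α)))) := by
      show ((_ : ℝ) * _) ^ (1 - (α + β)) = _
      rw [Real.mul_rpow hP.le (Real.rpow_pos_of_pos hG _).le,
        ← Real.rpow_mul hE.le, ← Real.rpow_mul hG.le]
      rw [show (1 - α) / (1 - α - β) * (1 - (α + β)) = 1 - α by
        rw [show 1 - (α + β) = 1 - α - β by ring, div_mul_eq_mul_div,
          mul_div_assoc, div_self hm.ne', mul_one]]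
      rw [show 1 / (1 - α - β) * (1 - (α + β)) = 1 by
        rw [show 1 - (α + β) = 1 - α - β by ring, one_div,
          inv_mul_cancel₀ hm.ne']]
      rw [Real.rpow_one]
    rw [hmid]
    have hsplit : ((2 * δ + σ ^ 2) / (2 * δ)) ^ (1 - α)
        = ((2 * δ + σ ^ 2) / (2 * δ)) / ((2 * δ + σ ^ 2) / (2 * δ)) ^ α := by
      rw [Real.rpow_sub hE, Real.rpow_one]
    rw [hsplit, hCdef]
    rw [div_eq_mul_inv, eq_inv_of_mul_eq_one_left hBα]
    field_simp
  have hfin := aux_tangent hC (by positivity : (0:ℝ) < q * δ) (by linarith : 0 < α + β)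
    hαβ hθStar hθhat hne hcrit
  exact hfin
end
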